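/- Let X be a Polish space and f : X × {0} → ℝ (i.e. f : X → ℝ, viewing ℝ^0 as a single point) upper semi-analytic, and suppose there exists c : X → ℝ with f(x) ≤ c(x) for all x. Then there exists a Borel measurable C : X → ℝ with f(x) ≤ C(x) for all x. -/

import Mathlib

/-!
The sets `{x | n < f x}` are analytic with empty intersection, so by Novikov's separation theorem
they lie in Borel sets `B n` with empty intersection, and `C x := min {n | x ∉ B n}` works.

Novikov's theorem is proved like Lusin's: if the ranges of continuous maps `g n : ℕ^ℕ → X` with
empty intersection were not Borel-separated, one could refine cylinders, one coordinate at a time,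
keeping the images non-separated. The limit points `x n` satisfy `g a (x a) ≠ g b (x b)` for some
`a, b`, and by continuity two disjoint open sets around these values separate the images of small
cylinders, a contradiction. Precomposing `g n` with the `n`-th column of `ℕ ≅ ℕ × ℕ` lets all
these cylinders be taken around a single point of `ℕ^ℕ`, refined one coordinate per step.
-/

open Set Function

namespace MeasureTheory

variable {α ι : Type*} [MeasurableSpace α]

def MeasurablySeparableFamily (s : ι → Set α) : Prop :=
  ∃ t : ι → Set α, (∀ i, MeasurableSet (t i)) ∧ (∀ i, s i ⊆ t i) ∧ ⋂ i, t i = ∅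

theorem measurablySeparableFamily_of_eq_empty {s : ι → Set α} {i : ι} (hi : s i = ∅) :
    MeasurablySeparableFamily s := by
  classical
  refine ⟨update (fun _ => univ) i ∅, fun j => ?_, fun j => ?_, ?_⟩
  · rcases eq_or_ne j i with rfl | hj <;> simp [*]
  · rcases eq_or_ne j i with rfl | hj <;> simp [*]
  · exact subset_empty_iff.1 ((iInter_subset _ i).trans (by simp))

theorem measurablySeparableFamily_of_disjoint {s : ι → Set α} {a b : ι} (hab : a ≠ b)
    {u v : Set α} (hu : MeasurableSet u) (hv : MeasurableSet v) (huv : Disjoint u v)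
    (hsu : s a ⊆ u) (hsv : s b ⊆ v) : MeasurablySeparableFamily s := by
  classical
  refine ⟨update (update (fun _ => univ) b v) a u, fun j => ?_, fun j => ?_, ?_⟩
  · rcases eq_or_ne j a with rfl | hja
    · simpa
    rcases eq_or_ne j b with rfl | hjb <;> simp [*]
  · rcases eq_or_ne j a with rfl | hja
    · simpa
    rcases eq_or_ne j b with rfl | hjb <;> simp [*]
  · refine subset_empty_iff.1 fun x hx => huv.le_bot ⟨?_, ?_⟩
    · simpa using mem_iInter.1 hx a
    · simpa [hab.symm] using mem_iInter.1 hx b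

theorem MeasurablySeparableFamily.update_iUnion [DecidableEq ι] {κ : Type*} [Countable κ]
    {s : ι → Set α} {m : ι} {t : κ → Set α}
    (h : ∀ k, MeasurablySeparableFamily (update s m (t k))) :
    MeasurablySeparableFamily (update s m (⋃ k, t k)) := by
  choose B hBm hsB hB using h
  refine ⟨update (fun i => ⋂ k, B k i) m (⋃ k, B k m), fun i => ?_, fun i => ?_, ?_⟩
  · rcases eq_or_ne i m with rfl | hi
    · simpa using MeasurableSet.iUnion fun k => hBm k i
    · simpa [hi] using MeasurableSet.iInter fun k => hBm k i
  · rcases eq_or_ne i m with rfl | hi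
    · simpa using iUnion_mono fun k => by simpa using hsB k i
    · simpa [hi] using fun k => by simpa [hi] using hsB k i
  · refine subset_empty_iff.1 fun x hx => ?_
    obtain ⟨k, hk⟩ := mem_iUnion.1 (by simpa using mem_iInter.1 hx m)
    rw [← hB k]
    refine mem_iInter.2 fun i => ?_
    rcases eq_or_ne i m with rfl | hi
    · exact hk
    · exact mem_iInter.1 (by simpa [hi] using mem_iInter.1 hx i) k

theorem MeasurablySeparableFamily.exists_measurable_notMem {s : ℕ → Set α}
    (h : MeasurablySeparableFamily s) : ∃ N : α → ℕ, Measurable N ∧ ∀ x, x ∉ s (N x) := by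
  classical
  obtain ⟨t, ht, hst, hempty⟩ := h
  have hex : ∀ x, ∃ n, x ∉ t n := fun x => by
    simpa using (Set.ext_iff.1 hempty x).1
  exact ⟨fun x => Nat.find (hex x), measurable_find hex fun n => (ht n).compl,
    fun x hx => Nat.find_spec (hex x) (hst _ hx)⟩

end MeasureTheory

namespace PiNat

variable {E : ℕ → Type*}

theorem exists_forall_cylinder_of_step {P : Set (∀ n, E n) → Prop}
    (step : ∀ x n, P (cylinder x n) → ∃ y, P (cylinder (update x n y) (n + 1)))
    (x₀ : ∀ n, E n) (h₀ : P (cylinder x₀ 0)) : ∃ x, ∀ n, P (cylinder x n) := by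
  classical
  have step' : ∀ x n, ∃ y, P (cylinder x n) → P (cylinder (update x n y) (n + 1)) :=
    fun x n => by
      by_cases hx : P (cylinder x n)
      · obtain ⟨y, hy⟩ := step x n hx
        exact ⟨y, fun _ => hy⟩
      · exact ⟨x n, fun h => absurd h hx⟩
  choose next hnext using step'
  let seq : ℕ → ∀ n, E n := fun n => Nat.rec x₀ (fun n z => update z n (next z n)) n
  let x : ∀ n, E n := fun n => next (seq n) n
  have hP : ∀ n, P (cylinder (seq n) n) := fun n => by
    induction n with
    | zero => exact h₀
    | succ n ih => exact hnext _ _ ih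
  have hx : ∀ n, x ∈ cylinder (seq n) n := fun n => by
    induction n with
    | zero => simp [cylinder_zero]
    | succ n ih =>
      refine mem_cylinder_iff.2 fun i hi => ?_
      rcases Nat.lt_succ_iff_lt_or_eq.1 hi with hin | rfl
      · simpa [seq, hin.ne] using mem_cylinder_iff.1 ih i hin
      · simp [seq, x]
  exact ⟨x, fun n => mem_cylinder_iff_eq.1 (hx n) ▸ hP n⟩

theorem image_cylinder_update_eq {β : Type*} {φ : (∀ n, E n) → β} {N : ℕ}
    (hφ : ∀ z y, φ (update z N y) = φ z) (z : ∀ n, E n) (y : E N) :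
    φ '' cylinder (update z N y) (N + 1) = φ '' cylinder z N := by
  refine subset_antisymm (image_mono fun w hw => ?_) ?_
  · rw [← iUnion_cylinder_update z N]
    exact mem_iUnion.2 ⟨y, hw⟩
  · rintro _ ⟨w, hw, rfl⟩
    refine ⟨update w N y, mem_cylinder_iff.2 fun i hi => ?_, hφ w y⟩
    rcases Nat.lt_succ_iff_lt_or_eq.1 hi with hiN | rfl
    · simpa [hiN.ne] using mem_cylinder_iff.1 hw i hiN
    · simp

theorem exists_image_cylinder_subset [∀ n, TopologicalSpace (E n)] [∀ n, DiscreteTopology (E n)]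
    {β : Type*} [TopologicalSpace β] {φ : (∀ n, E n) → β} {x : ∀ n, E n}
    (hφ : ContinuousAt φ x) {W : Set β} (hW : W ∈ nhds (φ x)) :
    ∃ N, φ '' cylinder x N ⊆ W := by
  obtain ⟨_, ⟨y, N, rfl⟩, hxy, hyW⟩ :=
    (isTopologicalBasis_cylinders E).mem_nhds_iff.1 (hφ hW)
  exact ⟨N, image_subset_iff.2 (mem_cylinder_iff_eq.1 hxy ▸ hyW)⟩

end PiNat

section PairColumn

variable {β : Type*}

def pairColumn (n : ℕ) (z : ℕ → β) : ℕ → β := fun k => z (Nat.pair n k)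

theorem continuous_pairColumn [TopologicalSpace β] (n : ℕ) : Continuous (pairColumn (β := β) n) :=
  continuous_pi fun _ => continuous_apply _

theorem surjective_pairColumn (n : ℕ) : Surjective (pairColumn (β := β) n) :=
  fun y => ⟨fun j => y (Nat.unpair j).2, funext fun k => by simp [pairColumn]⟩

theorem pairColumn_update_of_ne {n N : ℕ} (h : n ≠ (Nat.unpair N).1) (z : ℕ → β) (y : β) :
    pairColumn n (update z N y) = pairColumn n z := by
  funext k
  refine update_of_ne (fun hk => h ?_) _ _
  simp [← hk]

end PairColumn

namespace MeasureTheory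

variable {α : Type*} [MeasurableSpace α]

theorem exists_not_measurablySeparableFamily_image_cylinder_update {ι β : Type*}
    [DecidableEq ι] [Countable β] {h : ι → (ℕ → β) → α} {owner : ℕ → ι}
    (hh : ∀ i N z y, i ≠ owner N → h i (update z N y) = h i z) {z : ℕ → β} {N : ℕ}
    (hz : ¬MeasurablySeparableFamily fun i => h i '' PiNat.cylinder z N) :
    ∃ y, ¬MeasurablySeparableFamily fun i => h i '' PiNat.cylinder (update z N y) (N + 1) := by
  set F := fun i => h i '' PiNat.cylinder z N
  have hunion : F = update F (owner N)
      (⋃ y, h (owner N) '' PiNat.cylinder (update z N y) (N + 1)) := by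
    rw [← image_iUnion, PiNat.iUnion_cylinder_update (E := fun _ => β)]
    exact (update_eq_self _ _).symm
  have hupdate : ∀ y, (fun i => h i '' PiNat.cylinder (update z N y) (N + 1)) =
      update F (owner N) (h (owner N) '' PiNat.cylinder (update z N y) (N + 1)) := fun y => by
    funext i
    rcases eq_or_ne i (owner N) with rfl | hi
    · simp
    · rw [update_of_ne hi]
      exact PiNat.image_cylinder_update_eq (fun w y => hh i N w y hi) z y
  contrapose! hz
  rw [hunion]
  exact MeasurablySeparableFamily.update_iUnion fun y => hupdate y ▸ hz y

theorem measurablySeparableFamily_range [TopologicalSpace α] [T2Space α]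
    [OpensMeasurableSpace α] {g : ℕ → (ℕ → ℕ) → α} (hg : ∀ n, Continuous (g n))
    (h : ⋂ n, range (g n) = ∅) : MeasurablySeparableFamily fun n => range (g n) := by
  have hrange : ∀ n, range (g n) = range (g n ∘ pairColumn n) :=
    fun n => ((surjective_pairColumn n).range_comp _).symm
  simp only [hrange] at h ⊢
  by_contra hsep
  obtain ⟨x, hx⟩ := PiNat.exists_forall_cylinder_of_step
    (P := fun S => ¬MeasurablySeparableFamily fun n => (g n ∘ pairColumn n) '' S)
    (fun _ _ => exists_not_measurablySeparableFamily_image_cylinder_update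
      (owner := fun N => (Nat.unpair N).1)
      fun n _ z y hn => by simp only [comp_apply, pairColumn_update_of_ne hn z y]) 0
    (by simpa only [PiNat.cylinder_zero, image_univ] using hsep)
  obtain ⟨a, b, hab⟩ : ∃ a b, (g a ∘ pairColumn a) x ≠ (g b ∘ pairColumn b) x := by
    by_contra! hall
    exact eq_empty_iff_forall_notMem.1 h _ (mem_iInter.2 fun n => ⟨x, hall n 0⟩)
  obtain ⟨u, v, hu, hv, hau, hbv, huv⟩ := t2_separation hab
  have hcont : ∀ n, ContinuousAt (g n ∘ pairColumn n) x :=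
    fun n => ((hg n).comp (continuous_pairColumn n)).continuousAt
  obtain ⟨Na, hNa⟩ := PiNat.exists_image_cylinder_subset (hcont a) (hu.mem_nhds hau)
  obtain ⟨Nb, hNb⟩ := PiNat.exists_image_cylinder_subset (hcont b) (hv.mem_nhds hbv)
  have hne : a ≠ b := ne_of_apply_ne (fun n => (g n ∘ pairColumn n) x) hab
  refine hx (max Na Nb) (measurablySeparableFamily_of_disjoint hne hu.measurableSet
    hv.measurableSet huv ?_ ?_)
  · exact (image_mono (PiNat.cylinder_anti _ (le_max_left _ _))).trans hNa
  · exact (image_mono (PiNat.cylinder_anti _ (le_max_right _ _))).trans hNb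

theorem measurablySeparableFamily_of_analyticSet [TopologicalSpace α] [T2Space α]
    [OpensMeasurableSpace α] {s : ℕ → Set α} (hs : ∀ n, AnalyticSet (s n))
    (h : ⋂ n, s n = ∅) : MeasurablySeparableFamily s := by
  by_cases hempty : ∃ n, s n = ∅
  · obtain ⟨n, hn⟩ := hempty
    exact measurablySeparableFamily_of_eq_empty hn
  rw [not_exists] at hempty
  simp only [AnalyticSet_def] at hs
  choose g hg hgs using fun n => Or.resolve_left (hs n) (hempty n)
  obtain rfl : s = fun n => range (g n) := funext fun n => (hgs n).symm
  exact measurablySeparableFamily_range hg h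

end MeasureTheory

open MeasureTheory

theorem hyperplane_selection_base_general {X : Type*} [TopologicalSpace X] [PolishSpace X]
    [MeasurableSpace X] [BorelSpace X]
    (f : X → ℝ)
    (husa : ∀ γ : ℝ, AnalyticSet {x | γ < f x}) :
    ∃ C : X → ℝ, Measurable C ∧ ∀ x, f x ≤ C x := by
  have hempty : ⋂ n : ℕ, {x | (n : ℝ) < f x} = ∅ := eq_empty_of_forall_notMem fun x hx =>
    let ⟨n, hn⟩ := exists_nat_ge (f x)
    (mem_iInter.1 hx n).not_ge hn
  obtain ⟨N, hN, hfN⟩ :=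
    (measurablySeparableFamily_of_analyticSet (fun n => husa n) hempty).exists_measurable_notMem
  exact ⟨fun x => N x, measurable_from_nat.comp hN, fun x => not_lt.1 (hfN x)⟩

/-- Base case (n = 0) of the hyperplane selection theorem: a real-valued upper
semi-analytic function dominated by some real function is dominated by a Borel one. -/
theorem hyperplane_selection_base {X : Type*} [TopologicalSpace X] [PolishSpace X]
    [MeasurableSpace X] [BorelSpace X]
    (f : X → ℝ)
    (husa : ∀ γ : ℝ, AnalyticSet {x | γ < f x})
    (c : X → ℝ) (hc : ∀ x, f x ≤ c x) :
    ∃ C : X → ℝ, Measurable C ∧ ∀ x, f x ≤ C x :=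
  hyperplane_selection_base_general f husa
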